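/- arXiv:0807.4894 — 3 statements merged into one kernel-verified Lean document; each statement's English description precedes it below -/
import Mathlib

section
/- Deformed Whitney sum formula (Theorem 6.3, abstract form): let f, g : ℤ → A satisfy f_r = 0 for r > n and g_r = 0 for r > m, define the convolution h_r := ∑_{l∈ℤ} f_l·g_{r−l} (a finite sum), and define the transforms F_r := ∑_{k≥0} f_{r+k}·a_k, G_r := ∑_{k≥0} g_{r+k}·a_k, H_r := ∑_{k≥0} h_{r+k}·a_k. Then for every integer r one has H_r = ∑_{i,j,k≥0, l∈ℤ} F_{l+i}·G_{r−l+k+j}·b_i·b_j·a_k, where the sum on the right is finite (F_s = 0 for s > n and G_s = 0 for s > m). -/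
/-!
Write `T_c f r = ∑_{k ≥ 0} c_k f_{r+k}` for sequences vanishing above some index. Composition
multiplies generating series, `T_c ∘ T_d = T_{c·d}`, so `T_b` inverts `T_a`; and `T_c` commutes
with convolution by acting on one factor. Hence
`H = T_a (f ⋆ g) = f ⋆ G = (T_b F) ⋆ (T_b (T_a G))`, and expanding the last expression gives the
quadruple sum.
-/

open Finset Function

def VanishesAbove {M : Type*} [Zero M] (n : ℤ) (f : ℤ → M) : Prop :=
  ∀ r, n < r → f r = 0

section TailSum

variable {R M : Type*} [CommSemiring R] [AddCommMonoid M] [Module R M]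

noncomputable def tailSum (c : ℕ → R) (f : ℤ → M) (r : ℤ) : M :=
  ∑ᶠ k : ℕ, c k • f (r + k)

variable {n r : ℤ} {f : ℤ → M}

theorem VanishesAbove.support_subset_range (hf : VanishesAbove n f) (c : ℕ → R) {N : ℕ}
    (hN : n < r + N) : support (fun k : ℕ => c k • f (r + k)) ⊆ range N :=
  support_subset_iff'.2 fun k hk => by
    rw [hf _ (by simp only [coe_range, Set.mem_Iio, not_lt] at hk; omega), smul_zero]

theorem VanishesAbove.hasFiniteSupport (hf : VanishesAbove n f) (c : ℕ → R) (r : ℤ) :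
    HasFiniteSupport fun k : ℕ => c k • f (r + k) :=
  (range _).finite_toSet.subset (hf.support_subset_range c (N := (n - r).toNat + 1) (by omega))

theorem tailSum_eq_sum_range (hf : VanishesAbove n f) (c : ℕ → R) {N : ℕ} (hN : n < r + N) :
    tailSum c f r = ∑ k ∈ range N, c k • f (r + k) :=
  finsum_eq_sum_of_support_subset _ (hf.support_subset_range c hN)

theorem VanishesAbove.tailSum (hf : VanishesAbove n f) (c : ℕ → R) :
    VanishesAbove n (tailSum c f) := fun r hr =>
  finsum_eq_zero_of_forall_eq_zero fun k => by rw [hf _ (by omega), smul_zero]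

theorem tailSum_tailSum (hf : VanishesAbove n f) (c d : ℕ → R) :
    tailSum c (tailSum d f) =
      tailSum (fun t => PowerSeries.coeff t (PowerSeries.mk c * PowerSeries.mk d)) f := by
  funext r
  obtain ⟨N, hN⟩ : ∃ N : ℕ, n < r + N := ⟨(n - r).toNat + 1, by omega⟩
  calc tailSum c (tailSum d f) r
      = ∑ i ∈ range N, ∑ k ∈ range (N - i), (c i * d k) • f (r + (i + k : ℕ)) := by
        rw [tailSum_eq_sum_range (hf.tailSum d) c hN]
        refine sum_congr rfl fun i hi => ?_
        rw [tailSum_eq_sum_range hf d (N := N - i) (by rw [mem_range] at hi; omega), smul_sum]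
        refine sum_congr rfl fun k _ => ?_
        rw [smul_smul, Nat.cast_add, add_assoc]
    _ = ∑ t ∈ range N, ∑ i ∈ range (t + 1), (c i * d (t - i)) • f (r + t) := by
        rw [← sum_range_diag_flip]
        refine sum_congr rfl fun t _ => sum_congr rfl fun i hi => ?_
        rw [Nat.add_sub_cancel' (Nat.lt_succ_iff.1 (mem_range.1 hi))]
    _ = tailSum (fun t => PowerSeries.coeff t (PowerSeries.mk c * PowerSeries.mk d)) f r := by
        rw [tailSum_eq_sum_range hf _ hN]
        refine sum_congr rfl fun t _ => ?_
        rw [PowerSeries.coeff_mul, Nat.sum_antidiagonal_eq_sum_range_succ_mk, sum_smul]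
        simp only [PowerSeries.coeff_mk]

theorem tailSum_coeff_one (f : ℤ → M) :
    tailSum (fun t => PowerSeries.coeff t (1 : PowerSeries R)) f = f := by
  funext r
  rw [tailSum, finsum_eq_single _ 0 fun k hk => by simp [PowerSeries.coeff_one, hk]]
  simp

theorem tailSum_tailSum_of_mul_eq_one {a b : ℕ → R}
    (hab : PowerSeries.mk a * PowerSeries.mk b = 1) (hf : VanishesAbove n f) :
    tailSum b (tailSum a f) = f := by
  rw [tailSum_tailSum hf, mul_comm, hab, tailSum_coeff_one]

end TailSum

section Convolution

variable {R A : Type*} [CommSemiring R] [Semiring A] [Algebra R A]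
  {n m : ℤ} {f g : ℤ → A}

noncomputable def discreteConv (f g : ℤ → A) (s : ℤ) : A :=
  ∑ᶠ l, f l * g (s - l)

theorem discreteConv_eq_sum_Icc (hf : VanishesAbove n f) (hg : VanishesAbove m g) {s p : ℤ}
    (hp : p ≤ s - m) : discreteConv f g s = ∑ l ∈ Icc p n, f l * g (s - l) :=
  finsum_eq_sum_of_support_subset _ <| support_subset_iff'.2 fun l hl => by
    rcases le_or_gt l n with hln | hln
    · rw [hg _ (by simp only [coe_Icc, Set.mem_Icc] at hl; omega), mul_zero]
    · rw [hf _ hln, zero_mul]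

theorem VanishesAbove.discreteConv (hf : VanishesAbove n f) (hg : VanishesAbove m g) :
    VanishesAbove (n + m) (discreteConv f g) := fun s hs => by
  rw [discreteConv_eq_sum_Icc hf hg le_rfl, Icc_eq_empty_of_lt (by omega), sum_empty]

theorem tailSum_discreteConv (hf : VanishesAbove n f) (hg : VanishesAbove m g) (c : ℕ → R) :
    tailSum c (discreteConv f g) = discreteConv f (tailSum c g) := by
  funext r
  obtain ⟨N, hN⟩ : ∃ N : ℕ, n + m < r + N := ⟨(n + m - r).toNat + 1, by omega⟩
  calc tailSum c (discreteConv f g) r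
      = ∑ k ∈ range N, ∑ l ∈ Icc (r - m) n, c k • (f l * g (r + k - l)) := by
        rw [tailSum_eq_sum_range (hf.discreteConv hg) c hN]
        refine sum_congr rfl fun k _ => ?_
        rw [discreteConv_eq_sum_Icc hf hg (p := r - m) (by omega), smul_sum]
    _ = ∑ l ∈ Icc (r - m) n, f l * ∑ k ∈ range N, c k • g (r - l + k) := by
        rw [sum_comm]
        refine sum_congr rfl fun l _ => ?_
        rw [mul_sum]
        refine sum_congr rfl fun k _ => ?_
        rw [mul_smul_comm, sub_add_eq_add_sub]
    _ = ∑ l ∈ Icc (r - m) n, f l * tailSum c g (r - l) := by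
        refine sum_congr rfl fun l hl => ?_
        rw [tailSum_eq_sum_range hg c (N := N) (by rw [mem_Icc] at hl; omega)]
    _ = discreteConv f (tailSum c g) r :=
        (discreteConv_eq_sum_Icc hf (hg.tailSum c) le_rfl).symm

theorem finsum_mul_finsum {α β S : Type*} [NonUnitalNonAssocSemiring S] {u : α → S}
    {v : β → S} (hu : HasFiniteSupport u) (hv : HasFiniteSupport v) :
    (∑ᶠ i, u i) * ∑ᶠ j, v j = ∑ᶠ (i) (j), u i * v j := by
  rw [finsum_mul' _ _ hu]
  exact finsum_congr fun i => mul_finsum' _ _ hv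

theorem tailSum_mul_tailSum_tailSum (hf : VanishesAbove n f) (hg : VanishesAbove m g)
    (a b : ℕ → R) (l s : ℤ) :
    tailSum b f l * tailSum b (tailSum a g) s =
      ∑ᶠ (i : ℕ) (j : ℕ) (k : ℕ), (b i * b j * a k) • (f (l + i) * g (s + k + j)) := by
  rw [tailSum, tailSum,
    finsum_mul_finsum (hf.hasFiniteSupport b l) ((hg.tailSum a).hasFiniteSupport b s)]
  refine finsum_congr fun i => finsum_congr fun j => ?_
  rw [tailSum, smul_finsum' _ (hg.hasFiniteSupport a _),
    mul_finsum' _ _ ((hg.hasFiniteSupport a _).fun_comp (g := (b j • ·)) (smul_zero _))]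
  refine finsum_congr fun k => ?_
  rw [smul_smul, smul_mul_smul_comm, mul_assoc, add_right_comm]

end Convolution

theorem deformed_whitney_abstract_general {R : Type*} [CommRing R]
    {A : Type*} [CommRing A] [Algebra R A]
    (a b : ℕ → R)
    (hab : PowerSeries.mk a * PowerSeries.mk b = 1)
    (n m : ℤ) (f g : ℤ → A)
    (hf : ∀ r : ℤ, n < r → f r = 0) (hg : ∀ r : ℤ, m < r → g r = 0)
    (h : ℤ → A) (hh : ∀ r : ℤ, h r = ∑ᶠ l : ℤ, f l * g (r - l))
    (F : ℤ → A) (hF : ∀ r : ℤ, F r = ∑ᶠ k : ℕ, a k • f (r + (k : ℤ)))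
    (G : ℤ → A) (hG : ∀ r : ℤ, G r = ∑ᶠ k : ℕ, a k • g (r + (k : ℤ)))
    (H : ℤ → A) (hH : ∀ r : ℤ, H r = ∑ᶠ k : ℕ, a k • h (r + (k : ℤ))) :
    ∀ r : ℤ, H r =
      ∑ᶠ (l : ℤ) (i : ℕ) (j : ℕ) (k : ℕ),
        (b i * b j * a k) • (F (l + (i : ℤ)) * G (r - l + (k : ℤ) + (j : ℤ))) := by
  intro r
  obtain rfl : h = discreteConv f g := funext hh
  obtain rfl : F = tailSum a f := funext hF
  obtain rfl : G = tailSum a g := funext hG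
  obtain rfl : H = tailSum a (discreteConv f g) := funext hH
  calc tailSum a (discreteConv f g) r
      = discreteConv f (tailSum a g) r := by rw [tailSum_discreteConv hf hg]
    _ = discreteConv (tailSum b (tailSum a f)) (tailSum b (tailSum a (tailSum a g))) r := by
        rw [tailSum_tailSum_of_mul_eq_one hab hf,
          tailSum_tailSum_of_mul_eq_one hab (VanishesAbove.tailSum hg a)]
    _ = _ := finsum_congr fun l => tailSum_mul_tailSum_tailSum
        (VanishesAbove.tailSum hf a) (VanishesAbove.tailSum hg a) a b l (r - l)

/-- **Deformed Whitney sum formula** (Theorem 6.3, abstract form). Let `R` be a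
commutative ring, `a, b : ℕ → R` with `a 0 = 1` and `(∑ a_k x^k)·(∑ b_k x^k) = 1` in
`R⟦x⟧`, `A` a commutative `R`-algebra and `n, m : ℤ`. Suppose `f, g : ℤ → A` satisfy
`f r = 0` for `r > n` and `g r = 0` for `r > m`; let `h` be their convolution
`h r = ∑_{l ∈ ℤ} f l · g (r - l)` (a finite sum), and let `F, G, H` be the transforms
`F r = ∑_{k ≥ 0} f (r+k) · a k`, etc. Then for every `r : ℤ`,
`H r = ∑_{i,j,k ≥ 0, l ∈ ℤ} F (l+i) · G (r-l+k+j) · b i · b j · a k`,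
the right-hand sum being finite since `F s = 0` for `s > n` and `G s = 0` for `s > m`. -/
theorem deformed_whitney_abstract {R : Type*} [CommRing R]
    {A : Type*} [CommRing A] [Algebra R A]
    (a b : ℕ → R) (ha : a 0 = 1)
    (hab : PowerSeries.mk a * PowerSeries.mk b = 1)
    (n m : ℤ) (f g : ℤ → A)
    (hf : ∀ r : ℤ, n < r → f r = 0) (hg : ∀ r : ℤ, m < r → g r = 0)
    (h : ℤ → A) (hh : ∀ r : ℤ, h r = ∑ᶠ l : ℤ, f l * g (r - l))
    (F : ℤ → A) (hF : ∀ r : ℤ, F r = ∑ᶠ k : ℕ, a k • f (r + (k : ℤ)))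
    (G : ℤ → A) (hG : ∀ r : ℤ, G r = ∑ᶠ k : ℕ, a k • g (r + (k : ℤ)))
    (H : ℤ → A) (hH : ∀ r : ℤ, H r = ∑ᶠ k : ℕ, a k • h (r + (k : ℤ))) :
    ∀ r : ℤ, H r =
      ∑ᶠ (l : ℤ) (i : ℕ) (j : ℕ) (k : ℕ),
        (b i * b j * a k) • (F (l + (i : ℤ)) * G (r - l + (k : ℤ) + (j : ℤ))) :=
  deformed_whitney_abstract_general a b hab n m f g hf hg h hh F hF G hG H hH
end

section
/- Deformed Whitney sum formula for the classes Q (Theorem 6.3, concrete form): for all n, m ≥ 1 and every integer r, one has Q_r(t_1,…,t_{n+m}) = ∑_{i,j,k≥0, l∈ℤ} Q_{l+i}(t_1,…,t_n)·Q_{r−l+k+j}(t_{n+1},…,t_{n+m})·b_i·b_j·a_k in R⟦t_1,…,t_{n+m}⟧, where the sum is finite because Q_s(t_1,…,t_n) = 0 for s > n and Q_s(t_{n+1},…,t_{n+m}) = 0 for s > m. -/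
open Finset

variable {R : Type*} [CommRing R] {σ : Type*} [DecidableEq σ]

/-- The power series `F(t, t_i)` viewed as a power series in `t` with coefficients in
`R⟦t_j : j ∈ σ⟧`, where `F(u,v) = ∑ c i j • u^i v^j`. -/
noncomputable def Fser (c : ℕ → ℕ → R) (i : σ) : PowerSeries (MvPowerSeries σ R) :=
  PowerSeries.mk fun p =>
    (fun d => if d = Finsupp.single i (d i) then c p (d i) else 0 : MvPowerSeries σ R)

/-- The class `Φ_r(t_i : i ∈ s)`: for `r ≤ card s` it is the coefficient of
`t^(card s - r)` in `∏_{i ∈ s} F(t, t_i)`, and `0` for `r > card s`. -/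
noncomputable def PhiCl (c : ℕ → ℕ → R) (s : Finset σ) (r : ℤ) : MvPowerSeries σ R :=
  if r ≤ (s.card : ℤ) then
    PowerSeries.coeff ((s.card : ℤ) - r).toNat (∏ i ∈ s, Fser c i)
  else 0

/-- The class `Q_r(t_i : i ∈ s) = ∑_{k=0}^{card s - r} Φ_{r+k} · a_k` for `r ≤ card s`,
and `0` for `r > card s`. -/
noncomputable def QCl (c : ℕ → ℕ → R) (a : ℕ → R) (s : Finset σ) (r : ℤ) :
    MvPowerSeries σ R :=
  if r ≤ (s.card : ℤ) then
    ∑ k ∈ Finset.range (((s.card : ℤ) - r).toNat + 1),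
      MvPowerSeries.C (σ := σ) (R := R) (a k) * PhiCl c s (r + (k : ℤ))
  else 0

/-- The elementary symmetric power series in the variables `t_i`, `i ∈ s`. -/
noncomputable def esymmS (R : Type*) [CommRing R] (s : Finset σ) (r : ℕ) :
    MvPowerSeries σ R :=
  ∑ u ∈ s.powersetCard r, ∏ i ∈ u, MvPowerSeries.X i

/-! With `A(t) = ∑ aₖ tᵏ`, `B = A⁻¹` and `G_s(t) = ∏_{i ∈ s} F(t, tᵢ)`, the classes `Φ_r(s)` and
`Q_r(s)` are the coefficients of `t ^ (card s - r)` in `G_s` and `A · G_s`. Since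
`G_{s₁ ∪ s₂} = G_{s₁} · G_{s₂} = (B · A G_{s₁}) · (B · A G_{s₂})`, the coefficients of
`A · G_{s₁ ∪ s₂}` are the fivefold convolution of those of `A`, `B`, `B`, `A G_{s₁}` and `A G_{s₂}`.
-/

theorem Fin.card_filter_le_val_add (n m : ℕ) : #{i : Fin (n + m) | n ≤ (i : ℕ)} = m := by
  have h := card_filter_add_card_filter_not (s := univ) fun i : Fin (n + m) => (i : ℕ) < n
  simp only [not_lt, card_univ, Fintype.card_fin, Fin.card_filter_val_lt,
    min_eq_right (Nat.le_add_right n m)] at h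
  omega

theorem finsum₄_eq_sum_of_ne_zero {α β γ δ M : Type*} [AddCommMonoid M]
    {F : α → β → γ → δ → M} (s : Finset α) (t : Finset β) (u : Finset γ) (v : Finset δ)
    (hF : ∀ x y z w, F x y z w ≠ 0 → x ∈ s ∧ y ∈ t ∧ z ∈ u ∧ w ∈ v) :
    ∑ᶠ (x) (y) (z) (w), F x y z w = ∑ x ∈ s, ∑ y ∈ t, ∑ z ∈ u, ∑ w ∈ v, F x y z w := by
  have h₄ : ∀ x y z, ∑ᶠ w, F x y z w = ∑ w ∈ v, F x y z w := fun x y z =>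
    finsum_eq_sum_of_support_subset _ fun w hw => (hF x y z w hw).2.2.2
  have h₃ : ∀ x y, ∑ᶠ (z) (w), F x y z w = ∑ z ∈ u, ∑ w ∈ v, F x y z w := fun x y => by
    rw [finsum_congr (h₄ x y)]
    refine finsum_eq_sum_of_support_subset _ fun z hz => ?_
    obtain ⟨w, -, hw⟩ := exists_ne_zero_of_sum_ne_zero hz
    exact (hF x y z w hw).2.2.1
  have h₂ : ∀ x, ∑ᶠ (y) (z) (w), F x y z w = ∑ y ∈ t, ∑ z ∈ u, ∑ w ∈ v, F x y z w :=
    fun x => by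
      rw [finsum_congr (h₃ x)]
      refine finsum_eq_sum_of_support_subset _ fun y hy => ?_
      obtain ⟨z, -, hz⟩ := exists_ne_zero_of_sum_ne_zero hy
      obtain ⟨w, -, hw⟩ := exists_ne_zero_of_sum_ne_zero hz
      exact (hF x y z w hw).2.1
  rw [finsum_congr h₂]
  refine finsum_eq_sum_of_support_subset _ fun x hx => ?_
  obtain ⟨y, -, hy⟩ := exists_ne_zero_of_sum_ne_zero hx
  obtain ⟨z, -, hz⟩ := exists_ne_zero_of_sum_ne_zero hy
  obtain ⟨w, -, hw⟩ := exists_ne_zero_of_sum_ne_zero hz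
  exact (hF x y z w hw).1

namespace PowerSeries

noncomputable def revCoeff (N : ℕ) (f : R⟦X⟧) (r : ℤ) : R :=
  if r ≤ N then coeff (N - r).toNat f else 0

theorem revCoeff_of_lt {N : ℕ} {r : ℤ} (h : (N : ℤ) < r) (f : R⟦X⟧) : revCoeff N f r = 0 :=
  if_neg h.not_ge

theorem revCoeff_natCast_sub (N p : ℕ) (f : R⟦X⟧) : revCoeff N f (N - p) = coeff p f := by
  rw [revCoeff, if_pos (by omega), show ((N : ℤ) - (N - p)).toNat = p by omega]

theorem revCoeff_add_mul_eq_sum_range {N M K : ℕ} {r : ℤ} (hK : (N + M : ℤ) - r < K)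
    (f g : R⟦X⟧) :
    revCoeff (N + M) (f * g) r = ∑ k ∈ range K, coeff k f * revCoeff M g (r - N + k) := by
  by_cases hr : r ≤ (N + M : ℕ)
  · obtain ⟨p, rfl⟩ : ∃ p : ℕ, r = (N + M : ℕ) - p := ⟨((N + M : ℕ) - r).toNat, by omega⟩
    rw [revCoeff_natCast_sub, coeff_mul, Nat.sum_antidiagonal_eq_sum_range_succ_mk]
    refine sum_subset_zero_on_sdiff (range_subset_range.2 (by omega)) (fun k hk => ?_)
      fun k hk => ?_
    · rw [mem_sdiff, mem_range, mem_range] at hk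
      rw [revCoeff_of_lt (by omega), mul_zero]
    · rw [mem_range] at hk
      rw [show ((N + M : ℕ) : ℤ) - p - N + k = M - (p - k : ℕ) by omega, revCoeff_natCast_sub]
  · rw [revCoeff_of_lt (by omega)]
    exact (sum_eq_zero fun k _ => by rw [revCoeff_of_lt (by omega), mul_zero]).symm

theorem revCoeff_mul_eq_sum_range {M K : ℕ} {r : ℤ} (hK : (M : ℤ) - r ≤ K) (f g : R⟦X⟧) :
    revCoeff M (f * g) r = ∑ k ∈ range (K + 1), coeff k f * revCoeff M g (r + k) := by
  simpa using revCoeff_add_mul_eq_sum_range (N := 0) (K := K + 1) (by push_cast; omega) f g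

theorem revCoeff_add_mul_eq_sum_Icc {N M : ℕ} {r lo : ℤ} (hlo : lo ≤ r - M) (f g : R⟦X⟧) :
    revCoeff (N + M) (f * g) r = ∑ l ∈ Icc lo N, revCoeff N f l * revCoeff M g (r - l) := by
  rw [revCoeff_add_mul_eq_sum_range (K := (N + 1 - lo).toNat) (by omega)]
  refine sum_nbij' (fun k => N - k) (fun l => (N - l).toNat) ?_ ?_ ?_ ?_ fun k _ => ?_
  any_goals intro x hx; simp only [mem_range, mem_Icc] at hx ⊢; omega
  rw [revCoeff_natCast_sub, sub_sub_eq_add_sub, add_sub_right_comm]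

theorem revCoeff_mul_mul_mul {N M P : ℕ} {r : ℤ} (hP : (N + M : ℤ) - r ≤ P)
    (h h₁ h₂ f g : R⟦X⟧) :
    revCoeff (N + M) (h * ((h₁ * f) * (h₂ * g))) r =
      ∑ l ∈ Icc (r - M) N, ∑ i ∈ range (P + 1), ∑ j ∈ range (P + 1), ∑ k ∈ range (P + 1),
        coeff i h₁ * coeff j h₂ * coeff k h *
          (revCoeff N f (l + i) * revCoeff M g (r - l + k + j)) := by
  calc
    _ = ∑ k ∈ range (P + 1), ∑ l ∈ Icc (r - M) N,
          coeff k h * (revCoeff N (h₁ * f) l * revCoeff M (h₂ * g) (r + k - l)) := by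
      rw [revCoeff_mul_eq_sum_range (K := P) (by omega)]
      refine sum_congr rfl fun k _ => ?_
      rw [revCoeff_add_mul_eq_sum_Icc (lo := r - M) (by omega), mul_sum]
    _ = ∑ l ∈ Icc (r - M) N, ∑ k ∈ range (P + 1), ∑ i ∈ range (P + 1), ∑ j ∈ range (P + 1),
          coeff i h₁ * coeff j h₂ * coeff k h *
            (revCoeff N f (l + i) * revCoeff M g (r - l + k + j)) := by
      rw [sum_comm]
      refine sum_congr rfl fun l hl => sum_congr rfl fun k _ => ?_
      rw [mem_Icc] at hl
      rw [revCoeff_mul_eq_sum_range (K := P) (by omega),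
        revCoeff_mul_eq_sum_range (K := P) (by omega), sum_mul_sum, mul_sum]
      refine sum_congr rfl fun i _ => ?_
      rw [mul_sum]
      refine sum_congr rfl fun j _ => ?_
      rw [show r + k - l + j = r - l + k + j by ring]
      ring
    _ = _ := sum_congr rfl fun l _ => by
      rw [sum_comm]
      exact sum_congr rfl fun i _ => sum_comm

end PowerSeries

open PowerSeries

theorem phiCl_eq_revCoeff (c : ℕ → ℕ → R) (s : Finset σ) :
    PhiCl c s = revCoeff s.card (∏ i ∈ s, Fser c i) :=
  rfl

theorem qCl_eq_revCoeff (c : ℕ → ℕ → R) (a : ℕ → R) (s : Finset σ) :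
    QCl c a s = revCoeff s.card (map MvPowerSeries.C (mk a) * ∏ i ∈ s, Fser c i) := by
  ext1 r
  rw [QCl]
  split_ifs with hr
  · rw [revCoeff_mul_eq_sum_range (K := (s.card - r).toNat) (by omega)]
    simp only [coeff_map, coeff_mk, phiCl_eq_revCoeff]
  · rw [revCoeff_of_lt (not_le.1 hr)]

theorem qCl_eq_zero_of_card_lt (c : ℕ → ℕ → R) (a : ℕ → R) {s : Finset σ} {r : ℤ}
    (h : (s.card : ℤ) < r) : QCl c a s r = 0 :=
  if_neg h.not_ge

theorem le_card_of_qCl_ne_zero {c : ℕ → ℕ → R} {a : ℕ → R} {s : Finset σ} {r : ℤ}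
    (h : QCl c a s r ≠ 0) : r ≤ s.card :=
  not_lt.1 fun hr => h (qCl_eq_zero_of_card_lt c a hr)

theorem Q_deformed_whitney_sum_general {R : Type*} [CommRing R] (c : ℕ → ℕ → R)
    (a b : ℕ → R)
    (hab : PowerSeries.mk a * PowerSeries.mk b = 1)
    (n m : ℕ) (r : ℤ) :
    (∀ s : ℤ, (n : ℤ) < s →
      QCl c a (Finset.univ.filter fun i : Fin (n + m) => (i : ℕ) < n) s = 0) ∧
    (∀ s : ℤ, (m : ℤ) < s →
      QCl c a (Finset.univ.filter fun i : Fin (n + m) => n ≤ (i : ℕ)) s = 0) ∧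
    QCl c a (Finset.univ : Finset (Fin (n + m))) r =
      ∑ᶠ (l : ℤ) (i : ℕ) (j : ℕ) (k : ℕ),
        (b i * b j * a k) •
          (QCl c a (Finset.univ.filter fun i' : Fin (n + m) => (i' : ℕ) < n)
              (l + (i : ℤ)) *
            QCl c a (Finset.univ.filter fun i' : Fin (n + m) => n ≤ (i' : ℕ))
              (r - l + (k : ℤ) + (j : ℤ))) := by
  set s₁ : Finset (Fin (n + m)) := univ.filter fun i => (i : ℕ) < n
  set s₂ : Finset (Fin (n + m)) := univ.filter fun i => n ≤ (i : ℕ)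
  have hs₁ : s₁.card = n := by simp [s₁, Fin.card_filter_val_lt]
  have hs₂ : s₂.card = m := Fin.card_filter_le_val_add n m
  have hdisj : Disjoint s₁ s₂ := disjoint_filter.2 fun _ _ => not_le.2
  have hunion : s₁ ∪ s₂ = univ := by
    simpa only [not_lt] using filter_union_filter_not_eq (fun i : Fin (n + m) => (i : ℕ) < n) univ
  refine ⟨fun s hs => qCl_eq_zero_of_card_lt c a (by omega),
    fun s hs => qCl_eq_zero_of_card_lt c a (by omega), ?_⟩
  set A : PowerSeries (MvPowerSeries (Fin (n + m)) R) := map MvPowerSeries.C (mk a)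
  set B : PowerSeries (MvPowerSeries (Fin (n + m)) R) := map MvPowerSeries.C (mk b)
  have hG (s : Finset (Fin (n + m))) : ∏ i ∈ s, Fser c i = B * (A * ∏ i ∈ s, Fser c i) := by
    rw [← mul_assoc, mul_comm B, ← map_mul, hab, map_one, one_mul]
  set P := ((n + m : ℤ) - r).toNat
  have hbox (l : ℤ) (i j k : ℕ)
      (hF : (b i * b j * a k) • (QCl c a s₁ (l + i) * QCl c a s₂ (r - l + k + j)) ≠ 0) :
      l ∈ Icc (r - m) n ∧ i ∈ range (P + 1) ∧ j ∈ range (P + 1) ∧ k ∈ range (P + 1) := by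
    have hQ := right_ne_zero_of_smul hF
    have h₁ := le_card_of_qCl_ne_zero (left_ne_zero_of_mul hQ)
    have h₂ := le_card_of_qCl_ne_zero (right_ne_zero_of_mul hQ)
    simp only [mem_Icc, mem_range]
    omega
  rw [finsum₄_eq_sum_of_ne_zero _ _ _ _ hbox, qCl_eq_revCoeff, ← hunion, prod_union hdisj, hG s₁,
    hG s₂, card_union_of_disjoint hdisj, revCoeff_mul_mul_mul (P := P) (by omega)]
  simp only [qCl_eq_revCoeff, hs₁, hs₂, A, B, coeff_map, coeff_mk, MvPowerSeries.smul_eq_C_mul,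
    map_mul]

/-- **Deformed Whitney sum formula for the classes `Q`** (Theorem 6.3, concrete form).
Let `a, b : ℕ → R` with `a 0 = 1` and `(∑ a_k x^k)·(∑ b_k x^k) = 1` in `R⟦x⟧`. For all
`n, m ≥ 1` and every `r : ℤ`, in `R⟦t_1, …, t_{n+m}⟧` one has
`Q_r(t_1,…,t_{n+m}) = ∑_{i,j,k ≥ 0, l ∈ ℤ} Q_{l+i}(t_1,…,t_n) ·
Q_{r-l+k+j}(t_{n+1},…,t_{n+m}) · b_i · b_j · a_k`, the sum being finite since
`Q_s(t_1,…,t_n) = 0` for `s > n` and `Q_s(t_{n+1},…,t_{n+m}) = 0` for `s > m`. -/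
theorem Q_deformed_whitney_sum {R : Type*} [CommRing R] (c : ℕ → ℕ → R)
    (a b : ℕ → R) (ha : a 0 = 1)
    (hab : PowerSeries.mk a * PowerSeries.mk b = 1)
    (n m : ℕ) (hn : 1 ≤ n) (hm : 1 ≤ m) (r : ℤ) :
    (∀ s : ℤ, (n : ℤ) < s →
      QCl c a (Finset.univ.filter fun i : Fin (n + m) => (i : ℕ) < n) s = 0) ∧
    (∀ s : ℤ, (m : ℤ) < s →
      QCl c a (Finset.univ.filter fun i : Fin (n + m) => n ≤ (i : ℕ)) s = 0) ∧
    QCl c a (Finset.univ : Finset (Fin (n + m))) r =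
      ∑ᶠ (l : ℤ) (i : ℕ) (j : ℕ) (k : ℕ),
        (b i * b j * a k) •
          (QCl c a (Finset.univ.filter fun i' : Fin (n + m) => (i' : ℕ) < n)
              (l + (i : ℤ)) *
            QCl c a (Finset.univ.filter fun i' : Fin (n + m) => n ≤ (i' : ℕ))
              (r - l + (k : ℤ) + (j : ℤ))) :=
  Q_deformed_whitney_sum_general c a b hab n m r
end

section
/- Leading term of the classes Q (the claim in Section 3 that any solution A_r of Problem 3.4, in particular Q_r, has the form c_r^U(ξ) + terms vanishing under the augmentation map): suppose every monomial of F(u,v) − (u + v) has total degree at least 2, i.e., F(u,v) = u + v + ∑_{i,j≥1} c_{ij} u^i v^j. Then for every 0 ≤ r ≤ n, the difference Q_r(t_1,…,t_n) − e_r(t_1,…,t_n) is a power series all of whose monomials in t_1,…,t_n have total degree strictly greater than r, where e_r is the r-th elementary symmetric polynomial. -/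
open Finset

variable {R : Type*} [CommRing R] {σ : Type*} [DecidableEq σ]

/-!
Each factor `F(t, t_i) = t + t_i + (terms of degree ≥ 2)` has no constant term, so a monomial
`t^m t^d` of `∏_i F(t, t_i)` with `m + |d| ≤ n` can only arise by choosing one of the two linear
terms `t`, `t_i` in every factor. Hence it occurs iff `m + |d| = n` and `d` is squarefree, with
coefficient `1`. So `Φ_s` has no monomials of degree `< s` and agrees with `e_s` in degree `s`,
and in `Q_r = ∑_k a_k Φ_{r+k}` only the term `k = 0` reaches degree `≤ r`.
-/

namespace Finsupp

variable {ι : Type*} [DecidableEq ι]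

theorem sum_single_one_eq_iff (t : Finset ι) (d : ι →₀ ℕ) :
    ∑ i ∈ t, single i 1 = d ↔ t.val = toMultiset d := by
  rw [← (Function.LeftInverse.injective toMultiset_toFinsupp).eq_iff, toMultiset_sum_single,
    one_nsmul]

theorem nodup_toMultiset_iff (d : ι →₀ ℕ) : (toMultiset d).Nodup ↔ ∀ i, d i ≤ 1 := by
  simp only [Multiset.nodup_iff_count_le_one, count_toMultiset]

end Finsupp

section
variable {ι : Type*} [Fintype ι]

theorem esymmS_univ (r : ℕ) :
    esymmS R (univ : Finset ι) r = MvPolynomial.esymm ι R r := by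
  rw [← MvPolynomial.coeToMvPowerSeries.ringHom_apply, MvPolynomial.esymm, map_sum, esymmS]
  simp only [map_prod, MvPolynomial.coeToMvPowerSeries.ringHom_apply, MvPolynomial.coe_X]

theorem coeff_esymmS [DecidableEq ι] (r : ℕ) (d : ι →₀ ℕ) :
    MvPowerSeries.coeff d (esymmS R (univ : Finset ι) r) =
      if d.degree = r ∧ ∀ i, d i ≤ 1 then 1 else 0 := by
  rw [esymmS_univ, MvPolynomial.coeff_coe, MvPolynomial.esymm_eq_sum_monomial,
    MvPolynomial.coeff_sum]
  simp only [MvPolynomial.coeff_monomial, Finsupp.sum_single_one_eq_iff]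
  have hcard : Multiset.card (Finsupp.toMultiset d) = d.degree := by
    rw [Finsupp.card_toMultiset]; rfl
  split_ifs with h
  · let t₀ : Finset ι := ⟨_, (Finsupp.nodup_toMultiset_iff d).2 h.2⟩
    have ht₀ : t₀ ∈ powersetCard r univ := mem_powersetCard_univ.2 (hcard.trans h.1)
    simp only [show ∀ t : Finset ι, t.val = Finsupp.toMultiset d ↔ t = t₀ from
      fun t => Finset.val_inj (s := t) (t := t₀), sum_ite_eq', if_pos ht₀]
  · refine sum_eq_zero fun t ht => if_neg fun htd => h ⟨?_, ?_⟩
    · rw [← hcard, ← htd, Finset.card_val, (mem_powersetCard_univ.1 ht)]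
    · exact (Finsupp.nodup_toMultiset_iff d).1 (htd ▸ t.nodup)

/-- The factors are series each in the single variable `X i`, so in the coefficient of a product
only the splitting `D i = single i (d i)` of `d` contributes. -/
theorem sum_finsuppAntidiag_prod_ite_single [DecidableEq ι] (f : ι → ℕ → R)
    (d : ι →₀ ℕ) :
    ∑ D ∈ univ.finsuppAntidiag d,
        ∏ i, (if D i = Finsupp.single i (D i i) then f i (D i i) else 0) =
      ∏ i, f i (d i) := by
  let D₀ : ι →₀ ι →₀ ℕ :=
    Finsupp.equivFunOnFinite.symm fun i => Finsupp.single i (d i)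
  have hD₀ : D₀ ∈ univ.finsuppAntidiag d :=
    mem_finsuppAntidiag.2 ⟨Finsupp.univ_sum_single d, subset_univ _⟩
  rw [sum_eq_single_of_mem D₀ hD₀ fun D hD hne => ?_]
  · simp [D₀]
  by_contra hprod
  have hdiag : ∀ j, D j = Finsupp.single j (D j j) := fun j => by
    by_contra h
    exact hprod (prod_eq_zero (mem_univ j) (if_neg h))
  refine hne (Finsupp.ext fun i => (hdiag i).trans ?_)
  have hsum := DFunLike.congr_fun (mem_finsuppAntidiag.1 hD).1 i
  rw [Finsupp.finsetSum_apply, sum_eq_single_of_mem i (mem_univ i) fun j _ hji => by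
    rw [hdiag j, Finsupp.single_apply, if_neg hji]] at hsum
  simp [D₀, hsum]

theorem add_eq_one_of_prod_ne_zero [DecidableEq ι] (c : ℕ → ℕ → R) (h00 : c 0 0 = 0)
    {m : ℕ} {d l : ι →₀ ℕ}(hl : l ∈ univ.finsuppAntidiag m)
    (hdm : d.degree + m ≤ Fintype.card ι)
    (hprod : ∏ i, c (l i) (d i) ≠ 0) (i : ι) : l i + d i = 1 := by
  have hpos : ∀ j ∈ univ, 1 ≤ l j + d j := fun j _ => by
    by_contra! h
    obtain ⟨hlj, hdj⟩ : l j = 0 ∧ d j = 0 := by omega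
    exact hprod (prod_eq_zero (mem_univ j) (by rw [hlj, hdj, h00]))
  have hsum : ∑ j, (l j + d j) = m + d.degree := by
    rw [sum_add_distrib, (mem_finsuppAntidiag.1 hl).1, Finsupp.degree_eq_sum]
  have hle : ∑ j, (l j + d j) ≤ ∑ _j : ι, 1 := by
    rw [hsum, sum_const, card_univ, smul_eq_mul, mul_one]; omega
  exact ((sum_eq_sum_iff_of_le hpos).1 (le_antisymm (sum_le_sum hpos) hle) i (mem_univ i)).symm

theorem sum_finsuppAntidiag_prod_eq_ite [DecidableEq ι] (c : ℕ → ℕ → R) (h00 : c 0 0 = 0)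
    (h10 : c 1 0 = 1) (h01 : c 0 1 = 1) (m : ℕ) (d : ι →₀ ℕ)
    (hdm : d.degree + m ≤ Fintype.card ι) :
    ∑ l ∈ univ.finsuppAntidiag m, ∏ i, c (l i) (d i) =
      if d.degree + m = Fintype.card ι ∧ ∀ i, d i ≤ 1 then 1 else 0 := by
  let l₀ : ι →₀ ℕ := Finsupp.equivFunOnFinite.symm fun i => 1 - d i
  have hl₀ : ∀ i, l₀ i = 1 - d i := fun _ => rfl
  have hcard : Fintype.card ι = ∑ _i : ι, 1 := by simp
  have key : ∀ l ∈ univ.finsuppAntidiag m, ∏ i, c (l i) (d i) ≠ 0 →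
      (d.degree + m = Fintype.card ι ∧ ∀ i, d i ≤ 1) ∧ l = l₀ := by
    intro l hl hprod
    have hone := add_eq_one_of_prod_ne_zero c h00 hl hdm hprod
    refine ⟨⟨?_, fun i => by have := hone i; omega⟩, Finsupp.ext fun i => ?_⟩
    · rw [hcard, ← sum_congr rfl fun i _ => hone i, sum_add_distrib,
        (mem_finsuppAntidiag.1 hl).1, Finsupp.degree_eq_sum, add_comm]
    · have := hone i
      rw [hl₀]
      omega
  split_ifs with h
  · have hl₀mem : l₀ ∈ univ.finsuppAntidiag m := by
      refine mem_finsuppAntidiag.2 ⟨?_, subset_univ _⟩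
      show ∑ i, l₀ i = m
      have : ∑ i, (l₀ i + d i) = ∑ _i : ι, 1 :=
        sum_congr rfl fun i _ => by rw [hl₀]; have := h.2 i; omega
      rw [sum_add_distrib, ← hcard, ← Finsupp.degree_eq_sum d] at this
      omega
    rw [sum_eq_single_of_mem l₀ hl₀mem fun l hl hne =>
      by_contra fun hprod => hne (key l hl hprod).2]
    refine prod_eq_one fun i _ => ?_
    rcases Nat.le_one_iff_eq_zero_or_eq_one.1 (h.2 i) with hi | hi <;> simp [hl₀, hi, h10, h01]
  · exact sum_eq_zero fun l hl => by_contra fun hprod => h (key l hl hprod).1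

end

theorem coeff_coeff_Fser (c : ℕ → ℕ → R) (i : σ) (p : ℕ) (e : σ →₀ ℕ) :
    MvPowerSeries.coeff e (PowerSeries.coeff p (Fser c i)) =
      if e = Finsupp.single i (e i) then c p (e i) else 0 := by
  unfold Fser
  exact congr_arg (MvPowerSeries.coeff e) (PowerSeries.coeff_mk _ _)

section
variable [Fintype σ] (c : ℕ → ℕ → R)

theorem coeff_coeff_prod_Fser (m : ℕ) (d : σ →₀ ℕ) :
    MvPowerSeries.coeff d (PowerSeries.coeff m (∏ i, Fser c i)) =
      ∑ l ∈ univ.finsuppAntidiag m, ∏ i, c (l i) (d i) := by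
  rw [PowerSeries.coeff_prod, map_sum]
  refine sum_congr rfl fun l _ => ?_
  simp only [MvPowerSeries.coeff_prod, coeff_coeff_Fser]
  exact sum_finsuppAntidiag_prod_ite_single (fun i => c (l i)) d

theorem coeff_PhiCl_univ (h00 : c 0 0 = 0) (h10 : c 1 0 = 1) (h01 : c 0 1 = 1) {s : ℕ}
    (hs : s ≤ Fintype.card σ) {d : σ →₀ ℕ} (hd : d.degree ≤ s) :
    MvPowerSeries.coeff d (PhiCl c univ s) =
      if d.degree = s ∧ ∀ i, d i ≤ 1 then 1 else 0 := by
  rw [PhiCl, card_univ, if_pos (by exact_mod_cast hs),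
    show ((Fintype.card σ : ℤ) - s).toNat = Fintype.card σ - s by omega, coeff_coeff_prod_Fser,
    sum_finsuppAntidiag_prod_eq_ite c h00 h10 h01 _ _ (by omega)]
  exact if_congr (and_congr_left' (by omega)) rfl rfl

theorem coeff_QCl_univ (h00 : c 0 0 = 0) (h10 : c 1 0 = 1) (h01 : c 0 1 = 1) (a : ℕ → R)
    (ha0 : a 0 = 1) {r : ℕ} (hr : r ≤ Fintype.card σ) {d : σ →₀ ℕ}
    (hd : d.degree ≤ r) :
    MvPowerSeries.coeff d (QCl c a univ r) = MvPowerSeries.coeff d (PhiCl c univ r) := by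
  rw [QCl, card_univ, if_pos (by exact_mod_cast hr), map_sum,
    sum_eq_single_of_mem 0 (mem_range.2 (Nat.succ_pos _)) fun k hk hk0 => ?_]
  · rw [MvPowerSeries.coeff_C_mul, ha0, one_mul, Nat.cast_zero, add_zero]
  have hk : r + k ≤ Fintype.card σ := by have := mem_range.1 hk; omega
  rw [MvPowerSeries.coeff_C_mul, ← Nat.cast_add, coeff_PhiCl_univ c h00 h10 h01 hk (by omega),
    if_neg (by omega), mul_zero]

end

theorem Q_leading_term_general {R : Type*} [CommRing R] (c : ℕ → ℕ → R)
    (hc1 : ∀ i : ℕ, c i 0 = if i = 1 then 1 else 0)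
    (hc2 : ∀ j : ℕ, c 0 j = if j = 1 then 1 else 0)
    (a : ℕ → R) (ha0 : a 0 = 1)
    (n : ℕ) :
    ∀ r : ℕ, r ≤ n → ∀ d : Fin n →₀ ℕ, (d.sum fun _ e => e) ≤ r →
      MvPowerSeries.coeff (R := R) d
        (QCl c a (Finset.univ : Finset (Fin n)) (r : ℤ) -
          esymmS R (Finset.univ : Finset (Fin n)) r) = 0 := by
  intro r hr d hd
  have h00 : c 0 0 = 0 := by simpa using hc1 0
  have h10 : c 1 0 = 1 := by simpa using hc1 1
  have h01 : c 0 1 = 1 := by simpa using hc2 1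
  have hrn : r ≤ Fintype.card (Fin n) := by rwa [Fintype.card_fin]
  have hdr : d.degree ≤ r := hd
  rw [map_sub, coeff_QCl_univ c h00 h10 h01 a ha0 hrn hdr,
    coeff_PhiCl_univ c h00 h10 h01 hrn hdr, coeff_esymmS, sub_self]

/-- **Leading term of the classes `Q`** (Section 3: every solution of Problem 3.4, in
particular `Q_r`, has the form `c_r^U(ξ) + …` where the dots vanish under the
augmentation map). Suppose `F(u,v) = u + v + ∑_{i,j ≥ 1} c_{ij} u^i v^j`, i.e. every
monomial of `F(u,v) - (u + v)` has total degree at least `2` (equivalently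
`c i 0 = δ_{i,1}` and `c 0 j = δ_{j,1}`), and `a 0 = 1`. Then for every `0 ≤ r ≤ n`,
the difference `Q_r(t_1,…,t_n) - e_r(t_1,…,t_n)` is a power series all of whose
monomials have total degree strictly greater than `r`, where `e_r` is the `r`-th
elementary symmetric polynomial. -/
theorem Q_leading_term {R : Type*} [CommRing R] (c : ℕ → ℕ → R)
    (hc1 : ∀ i : ℕ, c i 0 = if i = 1 then 1 else 0)
    (hc2 : ∀ j : ℕ, c 0 j = if j = 1 then 1 else 0)
    (a : ℕ → R) (ha0 : a 0 = 1)
    (n : ℕ) (hn : 1 ≤ n) :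
    ∀ r : ℕ, r ≤ n → ∀ d : Fin n →₀ ℕ, (d.sum fun _ e => e) ≤ r →
      MvPowerSeries.coeff (R := R) d
        (QCl c a (Finset.univ : Finset (Fin n)) (r : ℤ) -
          esymmS R (Finset.univ : Finset (Fin n)) r) = 0 :=
  Q_leading_term_general c hc1 hc2 a ha0 n
end
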